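/- Suppose i ≠ j, H(j,i) = 0, H(i,j) = 0, each diagonal block D(k) is Hermitian positive semidefinite, and there are real numbers θ_i, θ_j, nonnegative reals r_{k,i}, r_{k,j}, and T×T complex matrices N_k such that for every k, H(k,j) = (r_{k,j}·exp(ι·θ_j)) • N_k and H(k,i) = (r_{k,i}·exp(ι·θ_i)) • N_k. Then the (j,i) block of (I−H)^* D (I−H) equals exp(ι·(θ_i−θ_j)) • B for some Hermitian positive semidefinite T×T matrix B, and consequently every eigenvalue of this block has the form exp(ι·(θ_i−θ_j))·r for some real r ≥ 0. -/

import Mathlib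

/-!
Because `i ≠ j` and `H j i = H i j = 0`, the identity blocks of `1 - H` contribute nothing to the
`(j, i)` block of `(1 - H)ᴴ D (1 - H)`, which is therefore `∑ k, H(k,j)ᴴ D(k) H(k,i)`. The common
phases factor out of every summand as `conj (e^{ιθj}) e^{ιθi} = e^{ι(θi - θj)}`, leaving the
nonnegative combination `∑ k, r_{k,j} r_{k,i} N_kᴴ D(k) N_k` of positive semidefinite matrices,
whose spectrum is real and nonnegative.
-/

open Matrix ComplexOrder

/-- The `(m·T) × (m·T)` block matrix with `(i,j)` block `H i j`. -/
def ofBlocks {m T : ℕ} (H : Fin m → Fin m → Matrix (Fin T) (Fin T) ℂ) :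
    Matrix (Fin m × Fin T) (Fin m × Fin T) ℂ :=
  Matrix.of fun p q => H p.1 q.1 p.2 q.2

/-- The block-diagonal `(m·T) × (m·T)` matrix with diagonal blocks `D i`. -/
def blkDiag {m T : ℕ} (D : Fin m → Matrix (Fin T) (Fin T) ℂ) :
    Matrix (Fin m × Fin T) (Fin m × Fin T) ℂ :=
  Matrix.of fun p q => if p.1 = q.1 then D p.1 p.2 q.2 else 0

/-- The `(i,j)` block (of size `T × T`) of an `(m·T) × (m·T)` matrix. -/
def blk {m T : ℕ} (A : Matrix (Fin m × Fin T) (Fin m × Fin T) ℂ) (i j : Fin m) :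
    Matrix (Fin T) (Fin T) ℂ :=
  Matrix.of fun a b => A (i, a) (j, b)

section Blocks

variable {m T : ℕ}

@[simp]
lemma blk_ofBlocks (H : Fin m → Fin m → Matrix (Fin T) (Fin T) ℂ) (i j : Fin m) :
    blk (ofBlocks H) i j = H i j := rfl

@[simp]
lemma blk_one (i j : Fin m) :
    blk (1 : Matrix (Fin m × Fin T) (Fin m × Fin T) ℂ) i j = if i = j then 1 else 0 := by
  ext a b
  by_cases h : i = j <;> simp [blk, one_apply, h]

@[simp]
lemma blk_sub (A B : Matrix (Fin m × Fin T) (Fin m × Fin T) ℂ) (i j : Fin m) :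
    blk (A - B) i j = blk A i j - blk B i j := rfl

lemma blk_conjTranspose (A : Matrix (Fin m × Fin T) (Fin m × Fin T) ℂ) (i j : Fin m) :
    blk Aᴴ i j = (blk A j i)ᴴ := rfl

lemma blk_blkDiag (D : Fin m → Matrix (Fin T) (Fin T) ℂ) (i j : Fin m) :
    blk (blkDiag D) i j = if i = j then D i else 0 := by
  ext a b
  by_cases h : i = j <;> simp [blk, blkDiag, h]

lemma blk_mul (A B : Matrix (Fin m × Fin T) (Fin m × Fin T) ℂ) (i j : Fin m) :
    blk (A * B) i j = ∑ k, blk A i k * blk B k j := by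
  ext a b
  simp [blk, mul_apply, Fintype.sum_prod_type, Matrix.sum_apply]

lemma blk_conjTranspose_mul_blkDiag_mul (A B : Matrix (Fin m × Fin T) (Fin m × Fin T) ℂ)
    (D : Fin m → Matrix (Fin T) (Fin T) ℂ) (i j : Fin m) :
    blk (Aᴴ * blkDiag D * B) i j = ∑ k, (blk A k i)ᴴ * D k * blk B k j := by
  rw [blk_mul]
  refine Finset.sum_congr rfl fun k _ => ?_
  rw [blk_mul, Finset.sum_eq_single k (fun l _ hlk => by simp [blk_blkDiag, hlk])
    (by simp), blk_blkDiag, if_pos rfl, blk_conjTranspose]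

lemma blk_gram_one_sub_ofBlocks_of_ne (H : Fin m → Fin m → Matrix (Fin T) (Fin T) ℂ)
    (D : Fin m → Matrix (Fin T) (Fin T) ℂ) {i j : Fin m} (hij : i ≠ j)
    (hji : H j i = 0) (hijz : H i j = 0) :
    blk ((1 - ofBlocks H)ᴴ * blkDiag D * (1 - ofBlocks H)) j i =
      ∑ k, (H k j)ᴴ * D k * H k i := by
  rw [blk_conjTranspose_mul_blkDiag_mul]
  refine Finset.sum_congr rfl fun k _ => ?_
  rcases eq_or_ne k j with rfl | hkj
  · simp [hij.symm, hji]
  rcases eq_or_ne k i with rfl | hki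
  · simp [hijz, hkj]
  · simp [hki, hkj]

end Blocks

lemma conjTranspose_smul_mul_mul_smul {n : Type*} [Fintype n] (a b : ℂ) (N D : Matrix n n ℂ) :
    (a • N)ᴴ * D * (b • N) = (star a * b) • (Nᴴ * D * N) := by
  rw [conjTranspose_smul, smul_mul, smul_mul, Matrix.mul_smul, smul_smul]

lemma star_ofReal_mul_exp_mul_ofReal_mul_exp (r s θ φ : ℝ) :
    star ((r : ℂ) * Complex.exp (Complex.I * θ)) * ((s : ℂ) * Complex.exp (Complex.I * φ)) =
      Complex.exp (Complex.I * (φ - θ)) * ((r * s : ℝ) : ℂ) := by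
  have hconj : star (Complex.exp (Complex.I * θ)) = Complex.exp (-(Complex.I * θ)) := by
    rw [Complex.star_def, ← Complex.exp_conj]
    simp
  rw [star_mul', hconj, Complex.star_def, Complex.conj_ofReal, mul_sub, sub_eq_add_neg,
    Complex.exp_add, Complex.ofReal_mul]
  ring

lemma exists_nonneg_eq_mul_of_mem_spectrum_smul {n : Type*} [Fintype n] [DecidableEq n]
    {B : Matrix n n ℂ} (hB : B.PosSemidef) {c : ℂ} (hc : c ≠ 0) {μ : ℂ}
    (hμ : μ ∈ spectrum ℂ (c • B)) : ∃ r : ℝ, 0 ≤ r ∧ μ = c * r := by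
  rw [← Units.val_mk0 hc, ← Units.smul_def, spectrum.unit_smul_eq_smul] at hμ
  obtain ⟨ν, hν, rfl⟩ := hμ
  have hν_nonneg : 0 ≤ ν := (posSemidef_iff_isHermitian_and_spectrum_nonneg.mp hB).2 hν
  obtain ⟨r, hr, rfl⟩ := RCLike.nonneg_iff_exists_ofReal.mp hν_nonneg
  exact ⟨r, hr, rfl⟩

theorem common_phase_block_constant_phase_general {m T : ℕ}
    (H : Fin m → Fin m → Matrix (Fin T) (Fin T) ℂ)
    (D : Fin m → Matrix (Fin T) (Fin T) ℂ)
    (hD : ∀ k, (D k).PosSemidef)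
    (i j : Fin m) (hij : i ≠ j)
    (hji : H j i = 0) (hijz : H i j = 0)
    (θi θj : ℝ) (rI rJ : Fin m → ℝ)
    (hrI : ∀ k, 0 ≤ rI k) (hrJ : ∀ k, 0 ≤ rJ k)
    (N : Fin m → Matrix (Fin T) (Fin T) ℂ)
    (hkj : ∀ k, H k j = ((rJ k : ℂ) * Complex.exp (Complex.I * θj)) • N k)
    (hki : ∀ k, H k i = ((rI k : ℂ) * Complex.exp (Complex.I * θi)) • N k) :
    (∃ B : Matrix (Fin T) (Fin T) ℂ, B.PosSemidef ∧
      blk ((1 - ofBlocks H)ᴴ * blkDiag D * (1 - ofBlocks H)) j i =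
        Complex.exp (Complex.I * (θi - θj)) • B) ∧
    ∀ μ ∈ spectrum ℂ (blk ((1 - ofBlocks H)ᴴ * blkDiag D * (1 - ofBlocks H)) j i),
      ∃ r : ℝ, 0 ≤ r ∧ μ = Complex.exp (Complex.I * (θi - θj)) * r := by
  set B := ∑ k, ((rJ k * rI k : ℝ) : ℂ) • ((N k)ᴴ * D k * N k)
  have hB : B.PosSemidef := posSemidef_sum _ fun k _ =>
    ((hD k).conjTranspose_mul_mul_same (N k)).smul
      (Complex.zero_le_real.mpr (mul_nonneg (hrJ k) (hrI k)))
  have hblock : blk ((1 - ofBlocks H)ᴴ * blkDiag D * (1 - ofBlocks H)) j i =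
      Complex.exp (Complex.I * (θi - θj)) • B := by
    rw [blk_gram_one_sub_ofBlocks_of_ne H D hij hji hijz, Finset.smul_sum]
    refine Finset.sum_congr rfl fun k _ => ?_
    rw [hkj, hki, conjTranspose_smul_mul_mul_smul, star_ofReal_mul_exp_mul_ofReal_mul_exp,
      smul_smul]
  refine ⟨⟨B, hB, hblock⟩, fun μ hμ => ?_⟩
  rw [hblock] at hμ
  exact exists_nonneg_eq_mul_of_mem_spectrum_smul hB (Complex.exp_ne_zero _) hμ

/-- Pruning theorem with relaxed common-child assumption: if all coupling
coefficients towards node `j` (resp. `i`) share a common phase `θj` (resp. `θi`),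
then the `(j,i)` block of `(I − H)ᴴ D (I − H)` is `exp(I·(θi − θj))` times a
Hermitian positive semidefinite matrix, so its eigenvalues lie on a fixed ray. -/
theorem common_phase_block_constant_phase {m T : ℕ}
    (H : Fin m → Fin m → Matrix (Fin T) (Fin T) ℂ)
    (hHdiag : ∀ i, H i i = 0)
    (D : Fin m → Matrix (Fin T) (Fin T) ℂ)
    (hD : ∀ k, (D k).PosSemidef)
    (i j : Fin m) (hij : i ≠ j)
    (hji : H j i = 0) (hijz : H i j = 0)
    (θi θj : ℝ) (rI rJ : Fin m → ℝ)
    (hrI : ∀ k, 0 ≤ rI k) (hrJ : ∀ k, 0 ≤ rJ k)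
    (N : Fin m → Matrix (Fin T) (Fin T) ℂ)
    (hkj : ∀ k, H k j = ((rJ k : ℂ) * Complex.exp (Complex.I * θj)) • N k)
    (hki : ∀ k, H k i = ((rI k : ℂ) * Complex.exp (Complex.I * θi)) • N k) :
    (∃ B : Matrix (Fin T) (Fin T) ℂ, B.PosSemidef ∧
      blk ((1 - ofBlocks H)ᴴ * blkDiag D * (1 - ofBlocks H)) j i =
        Complex.exp (Complex.I * (θi - θj)) • B) ∧
    ∀ μ ∈ spectrum ℂ (blk ((1 - ofBlocks H)ᴴ * blkDiag D * (1 - ofBlocks H)) j i),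
      ∃ r : ℝ, 0 ≤ r ∧ μ = Complex.exp (Complex.I * (θi - θj)) * r :=
  common_phase_block_constant_phase_general H D hD i j hij hji hijz θi θj rI rJ hrI hrJ N hkj hki
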